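/- Let an undirected graph H be represented as a graph database G = (V,E,κ) over the unary alphabet Σ = {a}, where E is symmetric ((v,a,v') ∈ E iff (v',a,v) ∈ E) and κ is injective. Then the RL sentence ¬∃π ∃λ ∃λ' e(π,λ,λ'), where e := ↓r. a(aa)*[r^=] over the single register r, holds in G if and only if H is bipartite: the formula ∃π ∃λ ∃λ' e(π,λ,λ') holds iff G contains a cycle of odd length, and a graph database is bipartite iff it has no odd-length cycles. Hence bipartiteness is expressible in RL. -/

import Mathlib

/-! # Common definitions: data graphs, paths, Turing machines, complexity classes -/

/-- A data graph: nodes `0, …, n-1`, a list of labeled edges `(source, label, target)`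
(labels are natural numbers), and a list of data values (`data.getD v 0` is the
data value of node `v`; data values are natural numbers, an infinite domain). -/
structure DataGraph where
  n : ℕ
  edges : List (ℕ × ℕ × ℕ)
  data : List ℕ
deriving DecidableEq

namespace DataGraph

/-- The data value of a node. -/
def val (G : DataGraph) (v : ℕ) : ℕ := G.data.getD v 0

/-- Well-formedness over the alphabet `{0, …, s-1}`. -/
def WF (G : DataGraph) (s : ℕ) : Prop :=
  (∀ e ∈ G.edges, e.1 < G.n ∧ e.2.1 < s ∧ e.2.2 < G.n) ∧ G.data.length = G.n

/-- Well-formedness, over an arbitrary finite alphabet of labels. -/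
def WFAny (G : DataGraph) : Prop :=
  (∀ e ∈ G.edges, e.1 < G.n ∧ e.2.2 < G.n) ∧ G.data.length = G.n

/-- A graph database: the data-value function is injective. -/
def IsDB (G : DataGraph) : Prop :=
  ∀ u v, u < G.n → v < G.n → G.val u = G.val v → u = v

/-- The set of data values occurring in `G`. -/
def dataVals (G : DataGraph) : Set ℕ := {d | ∃ v, v < G.n ∧ G.val v = d}

end DataGraph

/-- A raw path: a start node together with a list of steps (label, next node). -/
structure RawPath where
  start : ℕ
  steps : List (ℕ × ℕ)
deriving DecidableEq

namespace RawPath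

/-- The sequence of nodes along a path. -/
def nodes (ρ : RawPath) : List ℕ := ρ.start :: ρ.steps.map Prod.snd

/-- The final node of a path. -/
def last (ρ : RawPath) : ℕ := (ρ.steps.map Prod.snd).getLastD ρ.start

/-- The number of edges of the path; positions are `0, …, len`. -/
def len (ρ : RawPath) : ℕ := ρ.steps.length

/-- The node at position `i` (0-indexed). -/
def nodeAt (ρ : RawPath) (i : ℕ) : ℕ := ρ.nodes.getD i 0

/-- The label of the edge between positions `i` and `i+1`. -/
def labelAt (ρ : RawPath) (i : ℕ) : ℕ := (ρ.steps.map Prod.fst).getD i 0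

/-- The label of a path: its sequence of edge labels. -/
def label (ρ : RawPath) : List ℕ := ρ.steps.map Prod.fst

/-- Concatenation of two paths (meaningful when `ρ₁.last = ρ₂.start`). -/
def append (ρ₁ ρ₂ : RawPath) : RawPath := ⟨ρ₁.start, ρ₁.steps ++ ρ₂.steps⟩

end RawPath

/-- `ρ` is a path of the data graph `G`. -/
def DataGraph.IsPath (G : DataGraph) (ρ : RawPath) : Prop :=
  ρ.start < G.n ∧ ∀ i, i < ρ.steps.length →
    (ρ.nodeAt i, ρ.labelAt i, ρ.nodeAt (i + 1)) ∈ G.edges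

/-- A concrete encoding of a data graph as a word over `ℕ`. -/
def encodeGraph (G : DataGraph) : List ℕ :=
  G.n :: G.edges.length ::
    (((G.edges.map fun e => [e.1, e.2.1, e.2.2]).foldr (· ++ ·) []) ++
      G.data.length :: G.data)

/-! ## Turing machines and space-bounded computation -/

/-- A deterministic one-tape Turing machine; states and tape symbols coded by `ℕ`
(`0` is the blank symbol).  `δ q a = (q', a', d)`: new state, written symbol,
head direction (`true` = right). -/
structure TMach where
  q0 : ℕ
  qf : ℕ
  δ : ℕ → ℕ → ℕ × ℕ × Bool

namespace TMach

/-- One computation step on a configuration (state, head, tape). -/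
def stepc (M : TMach) (c : ℕ × ℕ × List ℕ) : ℕ × ℕ × List ℕ :=
  let out := M.δ c.1 (c.2.2.getD c.2.1 0)
  (out.1, (if out.2.2 then c.2.1 + 1 else c.2.1 - 1), c.2.2.set c.2.1 out.2.1)

/-- Initial configuration on input `w` with a tape of `m` cells. -/
def initConf (M : TMach) (w : List ℕ) (m : ℕ) : ℕ × ℕ × List ℕ :=
  (M.q0, 0, w ++ List.replicate (m - w.length) 0)

/-- `M` has an accepting run on input `w` using at most `m` tape cells. -/
def AcceptsWithin (M : TMach) (w : List ℕ) (m : ℕ) : Prop :=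
  ∃ k : ℕ, ((M.stepc)^[k] (M.initConf w m)).1 = M.qf ∧
    ∀ j, j ≤ k → ((M.stepc)^[j] (M.initConf w m)).2.1 < m

end TMach

/-- `tower k n`: a tower of exponentials of height `k`;
`tower 1 n = 2 ^ n` and `tower (k+1) n = 2 ^ tower k n`. -/
def tower : ℕ → ℕ → ℕ
  | 0, n => n
  | k + 1, n => 2 ^ tower k n

/-- A decision problem over words on the (infinite, ℕ-coded) alphabet. -/
abbrev Lang := Set (List ℕ)

/-- `L` is accepted in space `f`. -/
def AcceptedInSpace (f : ℕ → ℕ) (L : Lang) : Prop :=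
  ∃ M : TMach, ∀ w, w ∈ L ↔ M.AcceptsWithin w (f w.length)

/-- `k`-EXPSPACE: decidable in space `tower k (p(n))` for some polynomial `p`. -/
def InKExpSpace (k : ℕ) (L : Lang) : Prop :=
  ∃ P : Polynomial ℕ, AcceptedInSpace (fun n => tower k (P.eval n)) L

def InExpSpace (L : Lang) : Prop := InKExpSpace 1 L

def InPSpace (L : Lang) : Prop :=
  ∃ P : Polynomial ℕ, AcceptedInSpace (fun n => P.eval n) L

/-! ## Polynomial-time reductions (via Mathlib's TM2 model) -/

/-- A finite-alphabet encoding of `List ℕ`. -/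
def listNatFinEncoding : Computability.Encoding (List ℕ) Bool where
  encode w := Computability.encodingNatBool.encode (Encodable.encode w)
  decode l := (Computability.encodingNatBool.decode l).bind Encodable.decode
  decode_encode w := by
    simp

/-- `f` is computable in polynomial time. -/
def PolyTimeFun (f : List ℕ → List ℕ) : Prop :=
  Nonempty (Turing.TM2ComputableInPolyTime listNatFinEncoding.encode listNatFinEncoding.encode f)

/-- Polynomial-time many-one reducibility. -/
def ReducesTo (L₁ L₂ : Lang) : Prop :=
  ∃ f : List ℕ → List ℕ, PolyTimeFun f ∧ ∀ w, w ∈ L₁ ↔ f w ∈ L₂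

/-! ## Helpers for encodings -/

def encBlock (l : List ℕ) : List ℕ := l.length :: l

def encListL {α : Type} (enc : α → List ℕ) (l : List α) : List ℕ :=
  l.length :: ((l.map fun x => encBlock (enc x)).foldr (· ++ ·) [])

def encPath (ρ : RawPath) : List ℕ :=
  ρ.start :: ρ.steps.length :: ((ρ.steps.map fun s => [s.1, s.2]).foldr (· ++ ·) [])
/-! ## Walk logic (WL) -/

/-- WL formulas over an ℕ-coded alphabet.  Path variables are naturals; a position
variable is a pair `(p, t)` where `p` is its sort (a path variable) and `t` an index. -/
inductive WL where
  | edge (a : ℕ) (p : ℕ) (t₁ t₂ : ℕ)        -- `E_a(t₁^p, t₂^p)`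
  | lt (p : ℕ) (t₁ t₂ : ℕ)                  -- `t₁^p < t₂^p`
  | sim (p₁ t₁ p₂ t₂ : ℕ)                   -- `t₁^{p₁} ∼ t₂^{p₂}`
  | not (φ : WL)
  | or (φ ψ : WL)
  | exPos (p t : ℕ) (φ : WL)                -- `∃ t^p`
  | exPath (p : ℕ) (φ : WL)                 -- `∃ p`

namespace WL

/-- Satisfaction of WL formulas in a data graph, under an assignment of paths to
path variables and of positions to position variables. -/
def Sat (G : DataGraph) : WL → (ℕ → RawPath) → (ℕ × ℕ → ℕ) → Prop
  | .edge a p t₁ t₂, αp, αt =>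
      αt (p, t₂) = αt (p, t₁) + 1 ∧ αt (p, t₁) < (αp p).len ∧
        (αp p).labelAt (αt (p, t₁)) = a
  | .lt p t₁ t₂, _, αt => αt (p, t₁) < αt (p, t₂)
  | .sim p₁ t₁ p₂ t₂, αp, αt =>
      G.val ((αp p₁).nodeAt (αt (p₁, t₁))) = G.val ((αp p₂).nodeAt (αt (p₂, t₂)))
  | .not φ, αp, αt => ¬ Sat G φ αp αt
  | .or φ ψ, αp, αt => Sat G φ αp αt ∨ Sat G ψ αp αt
  | .exPos p t φ, αp, αt =>
      ∃ i, i ≤ (αp p).len ∧ Sat G φ αp (Function.update αt (p, t) i)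
  | .exPath p φ, αp, αt => ∃ ρ, G.IsPath ρ ∧ Sat G φ (Function.update αp p ρ) αt

/-- Truth of a Boolean (closed) WL formula in `G`. -/
def holds (G : DataGraph) (φ : WL) : Prop :=
  Sat G φ (fun _ => ⟨0, []⟩) (fun _ => 0)

/-- Free position variables. -/
def freePos : WL → Finset (ℕ × ℕ)
  | .edge _ p t₁ t₂ => {(p, t₁), (p, t₂)}
  | .lt p t₁ t₂ => {(p, t₁), (p, t₂)}
  | .sim p₁ t₁ p₂ t₂ => {(p₁, t₁), (p₂, t₂)}
  | .not φ => freePos φ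
  | .or φ ψ => freePos φ ∪ freePos ψ
  | .exPos p t φ => (freePos φ).erase (p, t)
  | .exPath p φ => (freePos φ).filter (fun v => v.1 ≠ p)

/-- Free path variables. -/
def freePath : WL → Finset ℕ
  | .edge _ p _ _ => {p}
  | .lt p _ _ => {p}
  | .sim p₁ _ p₂ _ => {p₁, p₂}
  | .not φ => freePath φ
  | .or φ ψ => freePath φ ∪ freePath ψ
  | .exPos p _ φ => insert p (freePath φ)
  | .exPath p φ => (freePath φ).erase p

/-- A Boolean WL formula: no free variables. -/
def Closed (φ : WL) : Prop := freePos φ = ∅ ∧ freePath φ = ∅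

/-- Labels appearing in a WL formula (its alphabet). -/
def labels : WL → Finset ℕ
  | .edge a _ _ _ => {a}
  | .lt _ _ _ => ∅
  | .sim _ _ _ _ => ∅
  | .not φ => labels φ
  | .or φ ψ => labels φ ∪ labels ψ
  | .exPos _ _ φ => labels φ
  | .exPath _ φ => labels φ

/-- The formula contains no path quantification. -/
def NoPathQuant : WL → Prop
  | .not φ => NoPathQuant φ
  | .or φ ψ => NoPathQuant φ ∧ NoPathQuant ψ
  | .exPos _ _ φ => NoPathQuant φ
  | .exPath _ _ => False
  | _ => True

/-- All position variables of the formula are of sort `p`. -/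
def OnlySort (p : ℕ) : WL → Prop
  | .edge _ q _ _ => q = p
  | .lt q _ _ => q = p
  | .sim q₁ _ q₂ _ => q₁ = p ∧ q₂ = p
  | .not φ => OnlySort p φ
  | .or φ ψ => OnlySort p φ ∧ OnlySort p ψ
  | .exPos q _ φ => q = p ∧ OnlySort p φ
  | .exPath _ φ => OnlySort p φ

end WL

/-- The evaluation problem `Eval(WL, φ)` for a fixed Boolean WL formula `φ` over the
alphabet `{0, …, s-1}`, as a language of encodings of data graphs. -/
def evalWL (s : ℕ) (φ : WL) : Lang :=
  {w | ∃ G : DataGraph, w = encodeGraph G ∧ G.WF s ∧ WL.holds G φ}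
/-! ## Regular expressions with memory (REM) and register logic (RL) -/

/-- Conditions over registers (registers are ℕ-indexed). -/
inductive RCond where
  | eq (i : ℕ)                       -- `r_i^=`
  | and (c₁ c₂ : RCond)
  | not (c : RCond)

/-- A register assignment: `none` is `⊥`. -/
abbrev RAsg := ℕ → Option ℕ

def botAsg : RAsg := fun _ => none

/-- Satisfaction of a condition by the current data value `d` and registers `lam`. -/
def RCond.CSat (d : ℕ) (lam : RAsg) : RCond → Prop
  | .eq i => lam i = some d
  | .and c₁ c₂ => RCond.CSat d lam c₁ ∧ RCond.CSat d lam c₂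
  | .not c => ¬ RCond.CSat d lam c

/-- Registers mentioned in a condition. -/
def RCond.regs : RCond → Finset ℕ
  | .eq i => {i}
  | .and c₁ c₂ => c₁.regs ∪ c₂.regs
  | .not c => c.regs

/-- Regular expressions with memory over an ℕ-coded alphabet and ℕ-indexed registers. -/
inductive REM where
  | eps
  | lab (a : ℕ)
  | union (e₁ e₂ : REM)
  | concat (e₁ e₂ : REM)
  | plus (e : REM)
  | test (e : REM) (c : RCond)       -- `e[c]`
  | store (rs : List ℕ) (e : REM)    -- `↓r̄. e`

/-- `e* := ε ∪ e⁺`. -/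
def REM.star (e : REM) : REM := .union .eps (.plus e)

def setRegs (lam : RAsg) (rs : List ℕ) (d : ℕ) : RAsg :=
  fun i => if i ∈ rs then some d else lam i

/-- Semantics of REMs: `REMSem G e ρ lam lam'` holds iff the path `ρ` (from `ρ.start` to
`ρ.last`) can be parsed according to `e`, transforming register assignment `lam`
into `lam'`. -/
inductive REMSem (G : DataGraph) : REM → RawPath → RAsg → RAsg → Prop
  | eps (u : ℕ) (hu : u < G.n) (lam : RAsg) : REMSem G .eps ⟨u, []⟩ lam lam
  | lab (u a v : ℕ) (h : (u, a, v) ∈ G.edges) (lam : RAsg) :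
      REMSem G (.lab a) ⟨u, [(a, v)]⟩ lam lam
  | unionL {e₁ e₂ ρ lam lam'} : REMSem G e₁ ρ lam lam' → REMSem G (.union e₁ e₂) ρ lam lam'
  | unionR {e₁ e₂ ρ lam lam'} : REMSem G e₂ ρ lam lam' → REMSem G (.union e₁ e₂) ρ lam lam'
  | concat {e₁ e₂ ρ₁ ρ₂ lam lam₁ lam'} :
      REMSem G e₁ ρ₁ lam lam₁ → REMSem G e₂ ρ₂ lam₁ lam' → ρ₁.last = ρ₂.start →
      REMSem G (.concat e₁ e₂) (ρ₁.append ρ₂) lam lam'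
  | plusOne {e ρ lam lam'} : REMSem G e ρ lam lam' → REMSem G (.plus e) ρ lam lam'
  | plusStep {e ρ₁ ρ₂ lam lam₁ lam'} :
      REMSem G e ρ₁ lam lam₁ → REMSem G (.plus e) ρ₂ lam₁ lam' → ρ₁.last = ρ₂.start →
      REMSem G (.plus e) (ρ₁.append ρ₂) lam lam'
  | test {e c ρ lam lam'} :
      REMSem G e ρ lam lam' → RCond.CSat (G.val ρ.last) lam' c →
      REMSem G (.test e c) ρ lam lam'
  | store {rs e ρ lam lam'} :
      REMSem G e ρ (setRegs lam rs (G.val ρ.start)) lam' →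
      REMSem G (.store rs e) ρ lam lam'

def REM.labels : REM → Finset ℕ
  | .eps => ∅
  | .lab a => {a}
  | .union e₁ e₂ => e₁.labels ∪ e₂.labels
  | .concat e₁ e₂ => e₁.labels ∪ e₂.labels
  | .plus e => e.labels
  | .test e _ => e.labels
  | .store _ e => e.labels

def REM.regs : REM → Finset ℕ
  | .eps => ∅
  | .lab _ => ∅
  | .union e₁ e₂ => e₁.regs ∪ e₂.regs
  | .concat e₁ e₂ => e₁.regs ∪ e₂.regs
  | .plus e => e.regs
  | .test e c => e.regs ∪ c.regs
  | .store rs e => rs.toFinset ∪ e.regs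

/-- A term denoting a register assignment: a register-assignment variable or `⊥̄`. -/
inductive RegTerm where
  | var (v : ℕ)
  | bot

def RegTerm.interp (αr : ℕ → RAsg) : RegTerm → RAsg
  | .var v => αr v
  | .bot => botAsg

def RegTerm.fv : RegTerm → Finset ℕ
  | .var v => {v}
  | .bot => ∅

/-- Register logic (RL). -/
inductive RL where
  | nodeEq (x y : ℕ)                            -- `x = y`
  | pathEq (p q : ℕ)                            -- `π = π'`
  | regEq (t₁ t₂ : RegTerm)                     -- `ν = ν'`, `ν = ⊥̄`
  | ends (x p y : ℕ)                            -- `(x, π, y)`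
  | rem (e : REM) (p : ℕ) (t₁ t₂ : RegTerm)     -- `e(π, ν₁, ν₂)`
  | not (φ : RL)
  | or (φ ψ : RL)
  | exNode (x : ℕ) (φ : RL)
  | exPath (p : ℕ) (φ : RL)
  | exReg (v : ℕ) (φ : RL)

/-- A valid register value for the logic with `k` registers over `G`: registers
`≥ k` are empty and stored data values occur in `G`. -/
def ValidAsg (G : DataGraph) (k : ℕ) (lam : RAsg) : Prop :=
  (∀ i, k ≤ i → lam i = none) ∧ ∀ i d, lam i = some d → d ∈ G.dataVals

namespace RL

/-- Satisfaction of RL formulas (with `k` registers) under assignments of nodes,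
paths and register values to the three kinds of variables. -/
def Sat (G : DataGraph) (k : ℕ) : RL → (ℕ → ℕ) → (ℕ → RawPath) → (ℕ → RAsg) → Prop
  | .nodeEq x y, αn, _, _ => αn x = αn y
  | .pathEq p q, _, αp, _ => αp p = αp q
  | .regEq t₁ t₂, _, _, αr => t₁.interp αr = t₂.interp αr
  | .ends x p y, αn, αp, _ => (αp p).start = αn x ∧ (αp p).last = αn y
  | .rem e p t₁ t₂, _, αp, αr => REMSem G e (αp p) (t₁.interp αr) (t₂.interp αr)
  | .not φ, αn, αp, αr => ¬ Sat G k φ αn αp αr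
  | .or φ ψ, αn, αp, αr => Sat G k φ αn αp αr ∨ Sat G k ψ αn αp αr
  | .exNode x φ, αn, αp, αr => ∃ u, u < G.n ∧ Sat G k φ (Function.update αn x u) αp αr
  | .exPath p φ, αn, αp, αr => ∃ ρ, G.IsPath ρ ∧ Sat G k φ αn (Function.update αp p ρ) αr
  | .exReg v φ, αn, αp, αr =>
      ∃ lam, ValidAsg G k lam ∧ Sat G k φ αn αp (Function.update αr v lam)

/-- Truth of a closed RL formula in `G`. -/
def holds (G : DataGraph) (k : ℕ) (φ : RL) : Prop :=
  Sat G k φ (fun _ => 0) (fun _ => ⟨0, []⟩) (fun _ => botAsg)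

def freeNode : RL → Finset ℕ
  | .nodeEq x y => {x, y}
  | .pathEq _ _ => ∅
  | .regEq _ _ => ∅
  | .ends x _ y => {x, y}
  | .rem _ _ _ _ => ∅
  | .not φ => freeNode φ
  | .or φ ψ => freeNode φ ∪ freeNode ψ
  | .exNode x φ => (freeNode φ).erase x
  | .exPath _ φ => freeNode φ
  | .exReg _ φ => freeNode φ

def freePath : RL → Finset ℕ
  | .nodeEq _ _ => ∅
  | .pathEq p q => {p, q}
  | .regEq _ _ => ∅
  | .ends _ p _ => {p}
  | .rem _ p _ _ => {p}
  | .not φ => freePath φ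
  | .or φ ψ => freePath φ ∪ freePath ψ
  | .exNode _ φ => freePath φ
  | .exPath p φ => (freePath φ).erase p
  | .exReg _ φ => freePath φ

def freeReg : RL → Finset ℕ
  | .nodeEq _ _ => ∅
  | .pathEq _ _ => ∅
  | .regEq t₁ t₂ => t₁.fv ∪ t₂.fv
  | .ends _ _ _ => ∅
  | .rem _ _ t₁ t₂ => t₁.fv ∪ t₂.fv
  | .not φ => freeReg φ
  | .or φ ψ => freeReg φ ∪ freeReg ψ
  | .exNode _ φ => freeReg φ
  | .exPath _ φ => freeReg φ
  | .exReg v φ => (freeReg φ).erase v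

/-- A closed RL formula (sentence). -/
def ClosedF (φ : RL) : Prop := freeNode φ = ∅ ∧ freePath φ = ∅ ∧ freeReg φ = ∅

def labels : RL → Finset ℕ
  | .rem e _ _ _ => e.labels
  | .not φ => labels φ
  | .or φ ψ => labels φ ∪ labels ψ
  | .exNode _ φ => labels φ
  | .exPath _ φ => labels φ
  | .exReg _ φ => labels φ
  | _ => ∅

def regs : RL → Finset ℕ
  | .rem e _ _ _ => e.regs
  | .not φ => regs φ
  | .or φ ψ => regs φ ∪ regs ψ
  | .exNode _ φ => regs φ
  | .exPath _ φ => regs φ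
  | .exReg _ φ => regs φ
  | _ => ∅

/-- The formula contains no path quantification. -/
def NoPathQuant : RL → Prop
  | .not φ => NoPathQuant φ
  | .or φ ψ => NoPathQuant φ ∧ NoPathQuant ψ
  | .exNode _ φ => NoPathQuant φ
  | .exReg _ φ => NoPathQuant φ
  | .exPath _ _ => False
  | _ => True

/-- Derived conjunction. -/
def and (φ ψ : RL) : RL := .not (.or (.not φ) (.not ψ))

/-- Derived implication. -/
def imp (φ ψ : RL) : RL := .or (.not φ) ψ

/-- Derived universal quantification over register assignments. -/
def allReg (v : ℕ) (φ : RL) : RL := .not (.exReg v (.not φ))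

end RL
/-! ## Positive fragment RL⁺, nested REMs, and NRL⁺ -/

/-- The positive fragment RL⁺ of register logic. -/
inductive RLPos where
  | nodeEq (x y : ℕ)
  | pathEq (p q : ℕ)
  | regEq (t₁ t₂ : RegTerm)
  | ends (x p y : ℕ)
  | rem (e : REM) (p : ℕ) (t₁ t₂ : RegTerm)
  | or (φ ψ : RLPos)
  | and (φ ψ : RLPos)
  | exNode (x : ℕ) (φ : RLPos)
  | exPath (p : ℕ) (φ : RLPos)
  | exReg (v : ℕ) (φ : RLPos)

namespace RLPos

def Sat (G : DataGraph) (k : ℕ) : RLPos → (ℕ → ℕ) → (ℕ → RawPath) → (ℕ → RAsg) → Prop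
  | .nodeEq x y, αn, _, _ => αn x = αn y
  | .pathEq p q, _, αp, _ => αp p = αp q
  | .regEq t₁ t₂, _, _, αr => t₁.interp αr = t₂.interp αr
  | .ends x p y, αn, αp, _ => (αp p).start = αn x ∧ (αp p).last = αn y
  | .rem e p t₁ t₂, _, αp, αr => REMSem G e (αp p) (t₁.interp αr) (t₂.interp αr)
  | .or φ ψ, αn, αp, αr => Sat G k φ αn αp αr ∨ Sat G k ψ αn αp αr
  | .and φ ψ, αn, αp, αr => Sat G k φ αn αp αr ∧ Sat G k ψ αn αp αr
  | .exNode x φ, αn, αp, αr => ∃ u, u < G.n ∧ Sat G k φ (Function.update αn x u) αp αr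
  | .exPath p φ, αn, αp, αr => ∃ ρ, G.IsPath ρ ∧ Sat G k φ αn (Function.update αp p ρ) αr
  | .exReg v φ, αn, αp, αr =>
      ∃ lam, ValidAsg G k lam ∧ Sat G k φ αn αp (Function.update αr v lam)

def freeNode : RLPos → Finset ℕ
  | .nodeEq x y => {x, y}
  | .pathEq _ _ => ∅
  | .regEq _ _ => ∅
  | .ends x _ y => {x, y}
  | .rem _ _ _ _ => ∅
  | .or φ ψ => freeNode φ ∪ freeNode ψ
  | .and φ ψ => freeNode φ ∪ freeNode ψ
  | .exNode x φ => (freeNode φ).erase x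
  | .exPath _ φ => freeNode φ
  | .exReg _ φ => freeNode φ

def freePath : RLPos → Finset ℕ
  | .nodeEq _ _ => ∅
  | .pathEq p q => {p, q}
  | .regEq _ _ => ∅
  | .ends _ p _ => {p}
  | .rem _ p _ _ => {p}
  | .or φ ψ => freePath φ ∪ freePath ψ
  | .and φ ψ => freePath φ ∪ freePath ψ
  | .exNode _ φ => freePath φ
  | .exPath p φ => (freePath φ).erase p
  | .exReg _ φ => freePath φ

def freeReg : RLPos → Finset ℕ
  | .regEq t₁ t₂ => t₁.fv ∪ t₂.fv
  | .rem _ _ t₁ t₂ => t₁.fv ∪ t₂.fv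
  | .or φ ψ => freeReg φ ∪ freeReg ψ
  | .and φ ψ => freeReg φ ∪ freeReg ψ
  | .exNode _ φ => freeReg φ
  | .exPath _ φ => freeReg φ
  | .exReg v φ => (freeReg φ).erase v
  | _ => ∅

def labels : RLPos → Finset ℕ
  | .rem e _ _ _ => e.labels
  | .or φ ψ => labels φ ∪ labels ψ
  | .and φ ψ => labels φ ∪ labels ψ
  | .exNode _ φ => labels φ
  | .exPath _ φ => labels φ
  | .exReg _ φ => labels φ
  | _ => ∅

end RLPos

/-- Nested regular expressions with memory (NREM): REMs plus the nesting operator `⟨e⟩`. -/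
inductive NREM where
  | eps
  | lab (a : ℕ)
  | union (e₁ e₂ : NREM)
  | concat (e₁ e₂ : NREM)
  | plus (e : NREM)
  | test (e : NREM) (c : RCond)
  | store (rs : List ℕ) (e : NREM)
  | nest (e : NREM)                  -- `⟨e⟩`

def NREM.star (e : NREM) : NREM := .union .eps (.plus e)

/-- Semantics of NREMs. -/
inductive NREMSem (G : DataGraph) : NREM → RawPath → RAsg → RAsg → Prop
  | eps (u : ℕ) (hu : u < G.n) (lam : RAsg) : NREMSem G .eps ⟨u, []⟩ lam lam
  | lab (u a v : ℕ) (h : (u, a, v) ∈ G.edges) (lam : RAsg) :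
      NREMSem G (.lab a) ⟨u, [(a, v)]⟩ lam lam
  | unionL {e₁ e₂ ρ lam lam'} : NREMSem G e₁ ρ lam lam' → NREMSem G (.union e₁ e₂) ρ lam lam'
  | unionR {e₁ e₂ ρ lam lam'} : NREMSem G e₂ ρ lam lam' → NREMSem G (.union e₁ e₂) ρ lam lam'
  | concat {e₁ e₂ ρ₁ ρ₂ lam lam₁ lam'} :
      NREMSem G e₁ ρ₁ lam lam₁ → NREMSem G e₂ ρ₂ lam₁ lam' → ρ₁.last = ρ₂.start →
      NREMSem G (.concat e₁ e₂) (ρ₁.append ρ₂) lam lam'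
  | plusOne {e ρ lam lam'} : NREMSem G e ρ lam lam' → NREMSem G (.plus e) ρ lam lam'
  | plusStep {e ρ₁ ρ₂ lam lam₁ lam'} :
      NREMSem G e ρ₁ lam lam₁ → NREMSem G (.plus e) ρ₂ lam₁ lam' → ρ₁.last = ρ₂.start →
      NREMSem G (.plus e) (ρ₁.append ρ₂) lam lam'
  | test {e c ρ lam lam'} :
      NREMSem G e ρ lam lam' → RCond.CSat (G.val ρ.last) lam' c →
      NREMSem G (.test e c) ρ lam lam'
  | store {rs e ρ lam lam'} :
      NREMSem G e ρ (setRegs lam rs (G.val ρ.start)) lam' →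
      NREMSem G (.store rs e) ρ lam lam'
  | nest {e ρ' lam lam'} :
      NREMSem G e ρ' lam lam' → NREMSem G (.nest e) ⟨ρ'.start, []⟩ lam lam

/-- NRL⁺: the positive fragment of register logic with nested REMs in its atoms. -/
inductive NRLPos where
  | nodeEq (x y : ℕ)
  | pathEq (p q : ℕ)
  | regEq (t₁ t₂ : RegTerm)
  | ends (x p y : ℕ)
  | rem (e : NREM) (p : ℕ) (t₁ t₂ : RegTerm)
  | or (φ ψ : NRLPos)
  | and (φ ψ : NRLPos)
  | exNode (x : ℕ) (φ : NRLPos)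
  | exPath (p : ℕ) (φ : NRLPos)
  | exReg (v : ℕ) (φ : NRLPos)

namespace NRLPos

def Sat (G : DataGraph) (k : ℕ) : NRLPos → (ℕ → ℕ) → (ℕ → RawPath) → (ℕ → RAsg) → Prop
  | .nodeEq x y, αn, _, _ => αn x = αn y
  | .pathEq p q, _, αp, _ => αp p = αp q
  | .regEq t₁ t₂, _, _, αr => t₁.interp αr = t₂.interp αr
  | .ends x p y, αn, αp, _ => (αp p).start = αn x ∧ (αp p).last = αn y
  | .rem e p t₁ t₂, _, αp, αr => NREMSem G e (αp p) (t₁.interp αr) (t₂.interp αr)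
  | .or φ ψ, αn, αp, αr => Sat G k φ αn αp αr ∨ Sat G k ψ αn αp αr
  | .and φ ψ, αn, αp, αr => Sat G k φ αn αp αr ∧ Sat G k ψ αn αp αr
  | .exNode x φ, αn, αp, αr => ∃ u, u < G.n ∧ Sat G k φ (Function.update αn x u) αp αr
  | .exPath p φ, αn, αp, αr => ∃ ρ, G.IsPath ρ ∧ Sat G k φ αn (Function.update αp p ρ) αr
  | .exReg v φ, αn, αp, αr =>
      ∃ lam, ValidAsg G k lam ∧ Sat G k φ αn αp (Function.update αr v lam)

end NRLPos

/-! ## Nondeterministic log-space machines (read-only input tape, bounded work tape) -/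

/-- A nondeterministic Turing machine with a read-only input tape and a work tape.
`δ q a b` (state, input symbol, work symbol) yields a list of possible moves
(new state, written work symbol, input head direction, work head direction);
`true` = right. -/
structure NTM where
  q0 : ℕ
  qf : ℕ
  δ : ℕ → ℕ → ℕ → List (ℕ × ℕ × Bool × Bool)

structure NConf where
  q : ℕ
  ih : ℕ
  wh : ℕ
  work : List ℕ
deriving DecidableEq

def NTM.nstep (M : NTM) (w : List ℕ) (c c' : NConf) : Prop :=
  ∃ t ∈ M.δ c.q (w.getD c.ih 0) (c.work.getD c.wh 0),
    c'.q = t.1 ∧ c'.work = c.work.set c.wh t.2.1 ∧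
    c'.ih = (if t.2.2.1 then c.ih + 1 else c.ih - 1) ∧
    c'.wh = (if t.2.2.2 then c.wh + 1 else c.wh - 1)

/-- `M` accepts `w` using at most `m` work-tape cells. -/
def NTM.Accepts (M : NTM) (w : List ℕ) (m : ℕ) : Prop :=
  ∃ c : NConf, Relation.ReflTransGen (fun a b => M.nstep w a b ∧ b.wh < m)
      ⟨M.q0, 0, 0, List.replicate m 0⟩ c ∧ c.q = M.qf

/-- Nondeterministic logarithmic space. -/
def InNLogSpace (L : Lang) : Prop :=
  ∃ (cst : ℕ) (M : NTM), ∀ w, w ∈ L ↔ M.Accepts w (cst * (Nat.log 2 w.length + 1) + cst)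
/-! ## Encodings of formulas and inputs -/

def encRegTerm : RegTerm → List ℕ
  | .var v => [0, v]
  | .bot => [1]

def encRCond : RCond → List ℕ
  | .eq i => [0, i]
  | .and c₁ c₂ => 1 :: (encRCond c₁ ++ encRCond c₂)
  | .not c => 2 :: encRCond c

def encREM : REM → List ℕ
  | .eps => [0]
  | .lab a => [1, a]
  | .union e₁ e₂ => 2 :: (encREM e₁ ++ encREM e₂)
  | .concat e₁ e₂ => 3 :: (encREM e₁ ++ encREM e₂)
  | .plus e => 4 :: encREM e
  | .test e c => 5 :: (encREM e ++ encRCond c)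
  | .store rs e => 6 :: rs.length :: (rs ++ encREM e)

def encRL : RL → List ℕ
  | .nodeEq x y => [0, x, y]
  | .pathEq p q => [1, p, q]
  | .regEq t₁ t₂ => 2 :: (encRegTerm t₁ ++ encRegTerm t₂)
  | .ends x p y => [3, x, p, y]
  | .rem e p t₁ t₂ => 4 :: p :: (encREM e ++ encRegTerm t₁ ++ encRegTerm t₂)
  | .not φ => 5 :: encRL φ
  | .or φ ψ => 6 :: (encRL φ ++ encRL ψ)
  | .exNode x φ => 7 :: x :: encRL φ
  | .exPath p φ => 8 :: p :: encRL φ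
  | .exReg v φ => 9 :: v :: encRL φ

def encNREM : NREM → List ℕ
  | .eps => [0]
  | .lab a => [1, a]
  | .union e₁ e₂ => 2 :: (encNREM e₁ ++ encNREM e₂)
  | .concat e₁ e₂ => 3 :: (encNREM e₁ ++ encNREM e₂)
  | .plus e => 4 :: encNREM e
  | .test e c => 5 :: (encNREM e ++ encRCond c)
  | .store rs e => 6 :: rs.length :: (rs ++ encNREM e)
  | .nest e => 7 :: encNREM e

def encNRLPos : NRLPos → List ℕ
  | .nodeEq x y => [0, x, y]
  | .pathEq p q => [1, p, q]
  | .regEq t₁ t₂ => 2 :: (encRegTerm t₁ ++ encRegTerm t₂)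
  | .ends x p y => [3, x, p, y]
  | .rem e p t₁ t₂ => 4 :: p :: (encNREM e ++ encRegTerm t₁ ++ encRegTerm t₂)
  | .or φ ψ => 6 :: (encNRLPos φ ++ encNRLPos ψ)
  | .and φ ψ => 10 :: (encNRLPos φ ++ encNRLPos ψ)
  | .exNode x φ => 7 :: x :: encNRLPos φ
  | .exPath p φ => 8 :: p :: encNRLPos φ
  | .exReg v φ => 9 :: v :: encNRLPos φ

/-- Decoding a list into a register assignment: entry `0` is `⊥`, entry `d+1` is value `d`. -/
def regOfList (l : List ℕ) : RAsg := fun i =>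
  match l.getD i 0 with
  | 0 => none
  | d + 1 => some d

/-- Validity of list-coded assignments (to node, path, and register-assignment
variables) over `G`, for the logic with `k` registers. -/
def AsgListsValid (G : DataGraph) (k : ℕ) (ns : List ℕ) (ps : List RawPath)
    (rs : List (List ℕ)) : Prop :=
  (∀ x ∈ ns, x < G.n) ∧ (∀ ρ ∈ ps, G.IsPath ρ) ∧ (∀ l ∈ rs, ValidAsg G k (regOfList l))

/-- Encoding of an input (data graph plus list-coded assignment). -/
def encInputAsg (G : DataGraph) (ns : List ℕ) (ps : List RawPath)
    (rs : List (List ℕ)) : List ℕ :=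
  encBlock (encodeGraph G) ++ encBlock (encListL (fun x => [x]) ns) ++
    encBlock (encListL encPath ps) ++ encBlock (encListL id rs)

/-- The evaluation problem for a fixed RL formula `φ` with `k` registers
(data complexity): inputs are a data graph together with an assignment
for the (free) variables of `φ`. -/
def evalRLFixed (k : ℕ) (φ : RL) : Lang :=
  {w | ∃ (G : DataGraph) (ns : List ℕ) (ps : List RawPath) (rs : List (List ℕ)),
      w = encInputAsg G ns ps rs ∧ G.WFAny ∧ AsgListsValid G k ns ps rs ∧
      RL.Sat G k φ (fun x => ns.getD x 0) (fun p => ps.getD p ⟨0, []⟩)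
        (fun v => regOfList (rs.getD v []))}

/-- The evaluation problem for a fixed closed RL formula (data complexity). -/
def evalRLSentence (k : ℕ) (φ : RL) : Lang :=
  {w | ∃ G : DataGraph, w = encodeGraph G ∧ G.WFAny ∧ RL.holds G k φ}

/-- Encoding of an input for the combined evaluation problem for RL. -/
def encInputRL (k : ℕ) (G : DataGraph) (φ : RL) (ns : List ℕ) (ps : List RawPath)
    (rs : List (List ℕ)) : List ℕ :=
  k :: encBlock (encRL φ) ++ encInputAsg G ns ps rs

/-- The (combined) evaluation problem for register logic, `Eval(RL)`. -/
def evalRLComb : Lang :=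
  {w | ∃ (k : ℕ) (G : DataGraph) (φ : RL) (ns : List ℕ) (ps : List RawPath)
      (rs : List (List ℕ)),
      w = encInputRL k G φ ns ps rs ∧ G.WFAny ∧ AsgListsValid G k ns ps rs ∧
      RL.Sat G k φ (fun x => ns.getD x 0) (fun p => ps.getD p ⟨0, []⟩)
        (fun v => regOfList (rs.getD v []))}

/-- The evaluation problem for a fixed RL⁺ formula (data complexity). -/
def evalRLPosFixed (k : ℕ) (φ : RLPos) : Lang :=
  {w | ∃ (G : DataGraph) (ns : List ℕ) (ps : List RawPath) (rs : List (List ℕ)),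
      w = encInputAsg G ns ps rs ∧ G.WFAny ∧ AsgListsValid G k ns ps rs ∧
      RLPos.Sat G k φ (fun x => ns.getD x 0) (fun p => ps.getD p ⟨0, []⟩)
        (fun v => regOfList (rs.getD v []))}

/-- The evaluation problem for a fixed NRL⁺ formula (data complexity). -/
def evalNRLPosFixed (k : ℕ) (φ : NRLPos) : Lang :=
  {w | ∃ (G : DataGraph) (ns : List ℕ) (ps : List RawPath) (rs : List (List ℕ)),
      w = encInputAsg G ns ps rs ∧ G.WFAny ∧ AsgListsValid G k ns ps rs ∧
      NRLPos.Sat G k φ (fun x => ns.getD x 0) (fun p => ps.getD p ⟨0, []⟩)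
        (fun v => regOfList (rs.getD v []))}

/-- Encoding of an input for the combined evaluation problem for NRL⁺. -/
def encInputNRLPos (k : ℕ) (G : DataGraph) (φ : NRLPos) (ns : List ℕ)
    (ps : List RawPath) (rs : List (List ℕ)) : List ℕ :=
  k :: encBlock (encNRLPos φ) ++ encInputAsg G ns ps rs

/-- The combined evaluation problem for NRL⁺. -/
def evalNRLPosComb : Lang :=
  {w | ∃ (k : ℕ) (G : DataGraph) (φ : NRLPos) (ns : List ℕ) (ps : List RawPath)
      (rs : List (List ℕ)),
      w = encInputNRLPos k G φ ns ps rs ∧ G.WFAny ∧ AsgListsValid G k ns ps rs ∧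
      NRLPos.Sat G k φ (fun x => ns.getD x 0) (fun p => ps.getD p ⟨0, []⟩)
        (fun v => regOfList (rs.getD v []))}

/-! ## Some graph-theoretic queries -/

/-- The query (Q): there are a node `z` and a path from `u` to `v` in which
every node is connected to `z` (by some path). -/
def QueryQ (G : DataGraph) (u v : ℕ) : Prop :=
  ∃ z, z < G.n ∧ ∃ ρ : RawPath, G.IsPath ρ ∧ ρ.start = u ∧ ρ.last = v ∧
    ∀ x ∈ ρ.nodes, ∃ ρ' : RawPath, G.IsPath ρ' ∧ ρ'.start = x ∧ ρ'.last = z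

/-- `G` has a Hamiltonian path: a path visiting every node exactly once. -/
def HamPath (G : DataGraph) : Prop :=
  ∃ ρ : RawPath, G.IsPath ρ ∧ ρ.nodes.Nodup ∧ ∀ v, v < G.n → v ∈ ρ.nodes

/-- `G` (as a representation of an undirected graph) is bipartite. -/
def Bipartite (G : DataGraph) : Prop :=
  ∃ S₁ S₂ : Set ℕ, (∀ v, v < G.n → ((v ∈ S₁ ∨ v ∈ S₂) ∧ ¬(v ∈ S₁ ∧ v ∈ S₂))) ∧
    ∀ e ∈ G.edges, (e.1 ∈ S₁ ∧ e.2.2 ∈ S₂) ∨ (e.1 ∈ S₂ ∧ e.2.2 ∈ S₁)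

/-- `G` contains a cycle of odd length. -/
def HasOddCycle (G : DataGraph) : Prop :=
  ∃ ρ : RawPath, G.IsPath ρ ∧ Odd ρ.steps.length ∧ ρ.last = ρ.start

/-- Isomorphism of data graphs (preserving edges and equalities of data values). -/
def GraphIso (G G' : DataGraph) : Prop :=
  G.n = G'.n ∧ ∃ f : ℕ → ℕ, Set.BijOn f (Set.Iio G.n) (Set.Iio G'.n) ∧
    (∀ u a v, u < G.n → v < G.n → ((u, a, v) ∈ G.edges ↔ (f u, a, f v) ∈ G'.edges)) ∧
    (∀ u v, u < G.n → v < G.n → (G.val u = G.val v ↔ G'.val (f u) = G'.val (f v)))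

/-- A Boolean query: an isomorphism-closed class of graph databases. -/
def IsoClosed (Q : Set DataGraph) : Prop :=
  ∀ G G', GraphIso G G' → (G ∈ Q ↔ G' ∈ Q)
/-! ## Counters and descriptions -/

/-- `Σ_k = {a_k, b_k}`, coded as `a_k = 2k` (representing 0) and `b_k = 2k+1`
(representing 1). -/
def sigmaAlph (k : ℕ) : Finset ℕ := {2 * k, 2 * k + 1}

/-- `Γ_k = Σ_1 ∪ ⋯ ∪ Σ_k`. -/
def gammaAlph (k : ℕ) : Finset ℕ := (Finset.range k).biUnion (fun i => sigmaAlph (i + 1))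

/-- The number represented by a word over some `Σ_k` (`a_k ↦ 0`, `b_k ↦ 1`),
least significant bit first. -/
def bitsVal (w : List ℕ) : ℕ := (w.zipIdx.map (fun x => (x.1 % 2) * 2 ^ x.2)).sum

/-- `SeqDesc Cnt Letter p j w ds`: `w` is a sequence `σ_p d_p ⋯ σ_j d_j` where
`Cnt i σ_i` holds for each `i`, each `d_i` satisfies `Letter`, and `ds = [d_p, …, d_j]`. -/
def SeqDesc (Cnt : ℕ → List ℕ → Prop) (Letter : ℕ → Prop) (p j : ℕ)
    (w : List ℕ) (ds : List ℕ) : Prop :=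
  ∃ σs : List (List ℕ),
    σs.length = j + 1 - p ∧ ds.length = j + 1 - p ∧
    (∀ i, i < σs.length → Cnt (p + i) (σs.getD i [])) ∧
    (∀ d ∈ ds, Letter d) ∧
    w = (List.zipWith (fun σ d => σ ++ [d]) σs ds).foldr (· ++ ·) []

/-- `IsCounterVal f0 n k w v`: `w` is a `k`-counter of length `n` representing the
number `v`. -/
def IsCounterVal (f0 n : ℕ) : ℕ → List ℕ → ℕ → Prop
  | 0, _, _ => False
  | 1, w, v => w.length = f0 * n ∧ (∀ l ∈ w, l ∈ sigmaAlph 1) ∧ v = bitsVal w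
  | k + 2, w, v =>
      ∃ ds : List ℕ,
        SeqDesc (fun i σ => IsCounterVal f0 n (k + 1) σ i) (· ∈ sigmaAlph (k + 2)) 0
          (tower (k + 1) (f0 * n) - 1) w ds ∧ v = bitsVal ds

/-- `w` is a `(k, f0·n, p)`-description over the alphabet `Δ`. -/
def IsDescription (f0 n k p : ℕ) (Δ : Finset ℕ) (w : List ℕ) : Prop :=
  2 ≤ k ∧ ∃ ds : List ℕ,
    SeqDesc (fun i σ => IsCounterVal f0 n (k - 1) σ i) (· ∈ Δ) p
      (tower k (f0 * (n - 1)) - 1) w ds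

/-- Projection of a word onto a subalphabet. -/
def proj (S : Finset ℕ) (l : List ℕ) : List ℕ := l.filter (fun a => decide (a ∈ S))

/-- The letter `c` occurs exactly once in `l`, namely at the first position. -/
def FirstOnly (c : ℕ) (l : List ℕ) : Prop := ∃ l', l = c :: l' ∧ c ∉ l'

/-- The letter `c` occurs exactly once in `l`, namely at the last position. -/
def LastOnly (c : ℕ) (l : List ℕ) : Prop := ∃ l', l = l' ++ [c] ∧ c ∉ l'

/-! ## First-order logic over the vocabulary τ -/

abbrev GPath (G : DataGraph) := {ρ : RawPath // G.IsPath ρ}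
abbrev RegVal (G : DataGraph) (k : ℕ) := {lam : RAsg // ValidAsg G k lam}

theorem botValid (G : DataGraph) (k : ℕ) : ValidAsg G k botAsg :=
  ⟨fun _ _ => rfl, fun _ d h => by simp [botAsg] at h⟩

/-- The common domain: nodes, paths and `k`-tuples of register values of `G`. -/
def TDom (G : DataGraph) (k : ℕ) : Type := Fin G.n ⊕ (GPath G ⊕ RegVal G k)

/-- Membership in the structure determined by a set `P` of paths. -/
def inTDom {G : DataGraph} {k : ℕ} (P : Set (GPath G)) : TDom G k → Prop
  | Sum.inl _ => True
  | Sum.inr (Sum.inl ρ) => ρ ∈ P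
  | Sum.inr (Sum.inr _) => True

/-- First-order formulas over the vocabulary
`⟨Nodes, Paths, Registers, Endpoints, e_1, …, e_m, ⊥̄⟩`; variables are naturals. -/
inductive FOF (m : ℕ) where
  | eq (x y : ℕ)
  | nodes (x : ℕ)
  | paths (x : ℕ)
  | registers (x : ℕ)
  | endpoints (x y z : ℕ)
  | erel (i : Fin m) (x y z : ℕ)
  | isBot (x : ℕ)
  | not (φ : FOF m)
  | or (φ ψ : FOF m)
  | ex (x : ℕ) (φ : FOF m)

/-- Quantifier rank. -/
def FOF.qrank {m : ℕ} : FOF m → ℕ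
  | .not φ => φ.qrank
  | .or φ ψ => max φ.qrank ψ.qrank
  | .ex _ φ => φ.qrank + 1
  | _ => 0

/-- Satisfaction over the τ-structure whose path elements are those in `P` (the
nodes and register values of `G` are always present). -/
def FOF.FSat {m : ℕ} (G : DataGraph) (k : ℕ) (es : Fin m → REM) (P : Set (GPath G)) :
    FOF m → (ℕ → TDom G k) → Prop
  | .eq x y, α => α x = α y
  | .nodes x, α => ∃ u, α x = Sum.inl u
  | .paths x, α => ∃ ρ, ρ ∈ P ∧ α x = Sum.inr (Sum.inl ρ)
  | .registers x, α => ∃ l, α x = Sum.inr (Sum.inr l)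
  | .endpoints x y z, α => ∃ (u v : Fin G.n) (ρ : GPath G), ρ ∈ P ∧
      α x = Sum.inl u ∧ α y = Sum.inr (Sum.inl ρ) ∧ α z = Sum.inl v ∧
      ρ.1.start = (u : ℕ) ∧ ρ.1.last = (v : ℕ)
  | .erel i x y z, α => ∃ (l₁ l₂ : RegVal G k) (ρ : GPath G), ρ ∈ P ∧
      α x = Sum.inr (Sum.inr l₁) ∧ α y = Sum.inr (Sum.inl ρ) ∧
      α z = Sum.inr (Sum.inr l₂) ∧ REMSem G (es i) ρ.1 l₁.1 l₂.1
  | .isBot x, α => α x = Sum.inr (Sum.inr ⟨botAsg, botValid G k⟩)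
  | .not φ, α => ¬ FOF.FSat G k es P φ α
  | .or φ ψ, α => FOF.FSat G k es P φ α ∨ FOF.FSat G k es P ψ α
  | .ex x φ, α => ∃ d : TDom G k, inTDom P d ∧ FOF.FSat G k es P φ (Function.update α x d)

/-- The path `ρ` satisfies the type `E` (relative to the REMs `es`). -/
def SatType {m : ℕ} (G : DataGraph) (k : ℕ) (es : Fin m → REM) (ρ : RawPath)
    (E : Set (Fin m × RegVal G k × RegVal G k)) : Prop :=
  ∀ (i : Fin m) (l₁ l₂ : RegVal G k), REMSem G (es i) ρ l₁.1 l₂.1 ↔ (i, l₁, l₂) ∈ E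
/-! ## Further auxiliary notions used in the statements -/

/-- PSPACE-hardness (w.r.t. polynomial-time reductions). -/
def PSpaceHard (L : Lang) : Prop := ∀ L' : Lang, InPSpace L' → ReducesTo L' L

/-- A Boolean query on graph databases over `{0, …, s-1}` is definable in WL. -/
def DefinableWL (s : ℕ) (Q : Set DataGraph) : Prop :=
  ∃ φ : WL, WL.Closed φ ∧ (∀ a ∈ WL.labels φ, a < s) ∧
    ∀ G : DataGraph, G.WF s → G.IsDB → (G ∈ Q ↔ WL.holds G φ)

/-- A Boolean query on graph databases over `{0, …, s-1}` is definable in RL. -/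
def DefinableRL (s : ℕ) (Q : Set DataGraph) : Prop :=
  ∃ (k : ℕ) (φ : RL), RL.ClosedF φ ∧ (∀ a ∈ RL.labels φ, a < s) ∧
    ∀ G : DataGraph, G.WF s → G.IsDB → (G ∈ Q ↔ RL.holds G k φ)

/-- Assignment of the path `ρ` to the path variable `0`. -/
def asg1 (ρ : RawPath) : ℕ → RawPath :=
  Function.update (fun _ => (⟨0, []⟩ : RawPath)) 0 ρ

/-- Assignment of `ρ`, `ρ'` to the path variables `0`, `1`. -/
def asg2 (ρ ρ' : RawPath) : ℕ → RawPath := Function.update (asg1 ρ) 1 ρ'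

/-- Default assignment for position variables. -/
def posDefault : ℕ × ℕ → ℕ := fun _ => 0

/-- The `Γ_k`-projection of the label of `ρ` is a `k`-counter encoding the number `v`. -/
def EncodesVal (f0 n k : ℕ) (ρ : RawPath) (v : ℕ) : Prop :=
  IsCounterVal f0 n k (proj (gammaAlph k) ρ.label) v

/-- The assignment sending the first variables to the parameter tuples
`vbar`, `ρbar`, `lbar` (and all remaining variables to `⊥̄`). -/
def paramAsg (G : DataGraph) (k : ℕ) {a b c : ℕ} (vbar : Fin a → Fin G.n)
    (ρbar : Fin b → GPath G) (lbar : Fin c → RegVal G k) : ℕ → TDom G k := fun x =>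
  if h : x < a then Sum.inl (vbar ⟨x, h⟩)
  else if h2 : x < a + b then Sum.inr (Sum.inl (ρbar ⟨x - a, by omega⟩))
  else if h3 : x < a + b + c then Sum.inr (Sum.inr (lbar ⟨x - a - b, by omega⟩))
  else Sum.inr (Sum.inr ⟨botAsg, botValid G k⟩)

/-- Encoding of an instance of the "`i` distinct paths of a given type" problem. -/
def encInst6 (G : DataGraph) (es : List REM) (u v : ℕ)
    (El : List (ℕ × List ℕ × List ℕ)) (i : ℕ) : List ℕ :=
  encBlock (encodeGraph G) ++ encBlock (encListL encREM es) ++ [u, v, i] ++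
    encBlock (encListL (fun t => t.1 :: (encBlock t.2.1 ++ encBlock t.2.2)) El)

/-- `ρ` satisfies the (list-coded) type `El` relative to the (list-coded) REMs `es`:
for every `e ∈ es` and all valid register values `lam`, `lam'`,
`(ρ.start, lam, ρ, ρ.last, lam') ∈ ⟦e⟧_G` exactly when the triple is listed in `El`. -/
def SatTypeList (G : DataGraph) (k : ℕ) (es : List REM) (ρ : RawPath)
    (El : List (ℕ × List ℕ × List ℕ)) : Prop :=
  ∀ idx, idx < es.length → ∀ lam lam' : RAsg, ValidAsg G k lam → ValidAsg G k lam' →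
    (REMSem G (es.getD idx .eps) ρ lam lam' ↔
      ∃ t ∈ El, t.1 = idx ∧ regOfList t.2.1 = lam ∧ regOfList t.2.2 = lam')

/-!
An odd closed walk rules out a 2-colouring, since colours alternate along walks. Conversely,
without odd closed walks, colouring each node by the parity of a walk from the least node of
its connected component is well defined and proper. The REM `↓r. a(aa)*[r^=]` matches exactly
the odd-length paths returning to a node with the starting data value, which in a graph
database means returning to the starting node.
-/

namespace RawPath

lemma last_cons (u : ℕ) (x : ℕ × ℕ) (s : List (ℕ × ℕ)) :
    (⟨u, x :: s⟩ : RawPath).last = (⟨x.2, s⟩ : RawPath).last := by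
  simp only [RawPath.last, List.map_cons, List.getLastD_cons]

end RawPath

namespace DataGraph

variable {G : DataGraph}

lemma WF.wfAny {s : ℕ} (h : G.WF s) : G.WFAny :=
  ⟨fun e he => ⟨(h.1 e he).1, (h.1 e he).2.2⟩, h.2⟩

lemma WF.label_eq_zero (h : G.WF 1) {u a v : ℕ} (he : (u, a, v) ∈ G.edges) : a = 0 := by
  have : a < 1 := (h.1 _ he).2.1
  omega

lemma isPath_nil {u : ℕ} : G.IsPath ⟨u, []⟩ ↔ u < G.n := by
  simp [IsPath]

lemma isPath_cons (hG : G.WFAny) {u a v : ℕ} {s : List (ℕ × ℕ)} :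
    G.IsPath ⟨u, (a, v) :: s⟩ ↔ (u, a, v) ∈ G.edges ∧ G.IsPath ⟨v, s⟩ := by
  simp only [IsPath, RawPath.nodeAt, RawPath.labelAt, RawPath.nodes, List.length_cons,
    List.map_cons]
  constructor
  · rintro ⟨-, h⟩
    have he : (u, a, v) ∈ G.edges := by simpa using h 0 (by omega)
    exact ⟨he, (hG.1 _ he).2, fun i hi => by simpa using h (i + 1) (by omega)⟩
  · rintro ⟨he, -, h⟩
    refine ⟨(hG.1 _ he).1, ?_⟩
    rintro (_ | i) hi
    · simpa using he
    · simpa using h i (by omega)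

lemma IsPath.append (hG : G.WFAny) {ρ₁ ρ₂ : RawPath} (h₁ : G.IsPath ρ₁) (h₂ : G.IsPath ρ₂)
    (hjoin : ρ₁.last = ρ₂.start) : G.IsPath (ρ₁.append ρ₂) := by
  obtain ⟨u, s⟩ := ρ₁
  induction s generalizing u with
  | nil =>
    obtain ⟨w, t⟩ := ρ₂
    obtain rfl : u = w := hjoin
    exact h₂
  | cons x s ih =>
    obtain ⟨a, v⟩ := x
    rw [isPath_cons hG] at h₁
    rw [RawPath.last_cons] at hjoin
    exact (isPath_cons hG).mpr ⟨h₁.1, ih v h₁.2 hjoin⟩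

lemma IsPath.last_lt (hG : G.WFAny) {ρ : RawPath} (h : G.IsPath ρ) : ρ.last < G.n := by
  obtain ⟨u, s⟩ := ρ
  induction s generalizing u with
  | nil => exact isPath_nil.mp h
  | cons x s ih =>
    obtain ⟨a, v⟩ := x
    rw [RawPath.last_cons]
    exact ih v ((isPath_cons hG).mp h).2

def HasWalk (G : DataGraph) (u v n : ℕ) : Prop :=
  ∃ ρ : RawPath, G.IsPath ρ ∧ ρ.start = u ∧ ρ.last = v ∧ ρ.steps.length = n

lemma hasWalk_zero_iff {u v : ℕ} : G.HasWalk u v 0 ↔ u < G.n ∧ u = v := by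
  constructor
  · rintro ⟨⟨w, s⟩, hp, rfl, hl, hn⟩
    obtain rfl : s = [] := List.length_eq_zero_iff.mp hn
    exact ⟨isPath_nil.mp hp, hl⟩
  · rintro ⟨hu, rfl⟩
    exact ⟨⟨u, []⟩, isPath_nil.mpr hu, rfl, rfl, rfl⟩

lemma hasWalk_succ_iff (hG : G.WFAny) {u v n : ℕ} :
    G.HasWalk u v (n + 1) ↔ ∃ a w, (u, a, w) ∈ G.edges ∧ G.HasWalk w v n := by
  constructor
  · rintro ⟨⟨u, _ | ⟨⟨a, w⟩, s⟩⟩, hp, rfl, hl, hn⟩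
    · simp at hn
    · rw [isPath_cons hG] at hp
      rw [RawPath.last_cons] at hl
      exact ⟨a, w, hp.1, ⟨w, s⟩, hp.2, rfl, hl, by simpa using hn⟩
  · rintro ⟨a, w, he, ⟨w, s⟩, hp, rfl, hl, hn⟩
    refine ⟨⟨u, (a, w) :: s⟩, (isPath_cons hG).mpr ⟨he, hp⟩, rfl, ?_, by simpa using hn⟩
    rwa [RawPath.last_cons]

lemma hasWalk_of_mem_edges (hG : G.WFAny) {u a v : ℕ} (he : (u, a, v) ∈ G.edges) :
    G.HasWalk u v 1 :=
  (hasWalk_succ_iff hG).mpr ⟨a, v, he, hasWalk_zero_iff.mpr ⟨(hG.1 _ he).2, rfl⟩⟩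

lemma HasWalk.trans (hG : G.WFAny) {u v w m n : ℕ} (h₁ : G.HasWalk u v m)
    (h₂ : G.HasWalk v w n) : G.HasWalk u w (m + n) := by
  induction m generalizing u with
  | zero =>
    obtain ⟨-, rfl⟩ := hasWalk_zero_iff.mp h₁
    simpa using h₂
  | succ m ih =>
    obtain ⟨a, x, he, hx⟩ := (hasWalk_succ_iff hG).mp h₁
    rw [Nat.add_right_comm]
    exact (hasWalk_succ_iff hG).mpr ⟨a, x, he, ih hx⟩

lemma HasWalk.symm (hG : G.WFAny) (hsym : ∀ u a v, (u, a, v) ∈ G.edges ↔ (v, a, u) ∈ G.edges)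
    {u v n : ℕ} (h : G.HasWalk u v n) : G.HasWalk v u n := by
  induction n generalizing u with
  | zero =>
    obtain ⟨hu, rfl⟩ := hasWalk_zero_iff.mp h
    exact hasWalk_zero_iff.mpr ⟨hu, rfl⟩
  | succ n ih =>
    obtain ⟨a, w, he, hw⟩ := (hasWalk_succ_iff hG).mp h
    exact (ih hw).trans hG (hasWalk_of_mem_edges hG ((hsym _ _ _).mp he))

lemma hasOddCycle_iff : HasOddCycle G ↔ ∃ u n, Odd n ∧ G.HasWalk u u n := by
  constructor
  · rintro ⟨ρ, hp, hodd, hcyc⟩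
    exact ⟨ρ.start, _, hodd, ρ, hp, rfl, hcyc, rfl⟩
  · rintro ⟨u, n, hodd, ρ, hp, hs, hl, rfl⟩
    exact ⟨ρ, hp, hodd, hl.trans hs.symm⟩

lemma HasWalk.mem_iff (hG : G.WFAny) {S : Set ℕ}
    (hS : ∀ e ∈ G.edges, e.1 ∈ S ↔ e.2.2 ∉ S) {u v n : ℕ} (h : G.HasWalk u v n) :
    v ∈ S ↔ (u ∈ S ↔ Even n) := by
  induction n generalizing u with
  | zero =>
    obtain ⟨-, rfl⟩ := hasWalk_zero_iff.mp h
    simp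
  | succ n ih =>
    obtain ⟨a, w, he, hw⟩ := (hasWalk_succ_iff hG).mp h
    have hcross := hS _ he
    rw [ih hw, Nat.even_add_one]
    tauto

lemma bipartite_iff_exists_crossing (hG : G.WFAny) :
    Bipartite G ↔ ∃ S : Set ℕ, ∀ e ∈ G.edges, e.1 ∈ S ↔ e.2.2 ∉ S := by
  constructor
  · rintro ⟨S₁, S₂, hpart, hedge⟩
    refine ⟨S₁, fun e he => ?_⟩
    have h₁ := hpart _ (hG.1 e he).1
    have h₂ := hpart _ (hG.1 e he).2
    rcases hedge e he with h | h <;> tauto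
  · rintro ⟨S, hS⟩
    refine ⟨S, Sᶜ, fun v _ => by simp [em], fun e he => ?_⟩
    have := hS e he
    simp only [Set.mem_compl_iff]
    tauto

lemma not_hasOddCycle_of_bipartite (hG : G.WFAny) (h : Bipartite G) : ¬HasOddCycle G := by
  obtain ⟨S, hS⟩ := (bipartite_iff_exists_crossing hG).mp h
  rw [hasOddCycle_iff]
  rintro ⟨u, n, hodd, hw⟩
  simpa [Nat.not_even_iff_odd.mpr hodd] using hw.mem_iff hG hS

noncomputable def root (G : DataGraph) (v : ℕ) : ℕ := sInf {w | ∃ n, G.HasWalk v w n}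

lemma exists_hasWalk_root {v : ℕ} (hv : v < G.n) : ∃ n, G.HasWalk v (G.root v) n :=
  csInf_mem (s := {w | ∃ n, G.HasWalk v w n}) ⟨v, 0, hasWalk_zero_iff.mpr ⟨hv, rfl⟩⟩

lemma HasWalk.root_eq (hG : G.WFAny)
    (hsym : ∀ u a v, (u, a, v) ∈ G.edges ↔ (v, a, u) ∈ G.edges) {u v n : ℕ}
    (h : G.HasWalk u v n) : G.root u = G.root v := by
  refine congrArg sInf (Set.ext fun w => ⟨fun ⟨m, hm⟩ => ?_, fun ⟨m, hm⟩ => ?_⟩)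
  · exact ⟨n + m, (h.symm hG hsym).trans hG hm⟩
  · exact ⟨n + m, h.trans hG hm⟩

lemma crossing_of_not_hasOddCycle (hG : G.WFAny)
    (hsym : ∀ u a v, (u, a, v) ∈ G.edges ↔ (v, a, u) ∈ G.edges) (h : ¬HasOddCycle G) :
    ∀ e ∈ G.edges, e.1 ∈ {v | ∃ n, Even n ∧ G.HasWalk (G.root v) v n} ↔
      e.2.2 ∉ {v | ∃ n, Even n ∧ G.HasWalk (G.root v) v n} := by
  rintro ⟨u, a, v⟩ he
  rw [hasOddCycle_iff] at h
  have huv := hasWalk_of_mem_edges hG he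
  obtain ⟨m, hm⟩ := exists_hasWalk_root (hG.1 _ he).1
  simp only [Set.mem_ofPred_eq, ← huv.root_eq hG hsym]
  constructor
  · rintro ⟨k, hk, hu⟩ ⟨l, hl, hv⟩
    exact h ⟨_, _, by simp [parity_simps, hk, hl], (hu.trans hG huv).trans hG (hv.symm hG hsym)⟩
  · intro hv
    refine ⟨m, ?_, hm.symm hG hsym⟩
    by_contra hodd
    exact hv ⟨m + 1, by simp [parity_simps, hodd], (hm.symm hG hsym).trans hG huv⟩

lemma bipartite_iff_not_hasOddCycle (hG : G.WFAny)
    (hsym : ∀ u a v, (u, a, v) ∈ G.edges ↔ (v, a, u) ∈ G.edges) :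
    Bipartite G ↔ ¬HasOddCycle G :=
  ⟨not_hasOddCycle_of_bipartite hG, fun h =>
    (bipartite_iff_exists_crossing hG).mpr ⟨_, crossing_of_not_hasOddCycle hG hsym h⟩⟩

end DataGraph

/-- The parity of the length of every path matched by `e`, when the syntax of `e` forces one. -/
def REM.lengthParity : REM → Option (ZMod 2)
  | .eps => some 0
  | .lab _ => some 1
  | .union e₁ e₂ => if e₁.lengthParity = e₂.lengthParity then e₁.lengthParity else none
  | .concat e₁ e₂ => Option.map₂ (· + ·) e₁.lengthParity e₂.lengthParity
  | .plus e => if e.lengthParity = some 0 then some 0 else none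
  | .test e _ => e.lengthParity
  | .store _ e => e.lengthParity

namespace REMSem

variable {G : DataGraph} {e : REM} {ρ : RawPath} {lam lam' : RAsg}

lemma isPath (hG : G.WFAny) (h : REMSem G e ρ lam lam') : G.IsPath ρ := by
  induction h with
  | eps u hu => exact DataGraph.isPath_nil.mpr hu
  | lab u a v he =>
    exact (DataGraph.isPath_cons hG).mpr ⟨he, DataGraph.isPath_nil.mpr (hG.1 _ he).2⟩
  | unionL _ ih | unionR _ ih | plusOne _ ih | test _ _ ih | store _ ih => exact ih
  | concat _ _ hjoin ih₁ ih₂ | plusStep _ _ hjoin ih₁ ih₂ => exact ih₁.append hG ih₂ hjoin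

lemma length_cast_eq (h : REMSem G e ρ lam lam') {p : ZMod 2} (hp : e.lengthParity = some p) :
    (ρ.steps.length : ZMod 2) = p := by
  induction h generalizing p with
  | eps => simp_all [REM.lengthParity]
  | lab => simp_all [REM.lengthParity]
  | unionL _ ih =>
    simp only [REM.lengthParity] at hp
    split_ifs at hp
    exact ih hp
  | unionR _ ih =>
    simp only [REM.lengthParity] at hp
    split_ifs at hp with heq
    exact ih (heq ▸ hp)
  | concat _ _ _ ih₁ ih₂ =>
    obtain ⟨p₁, p₂, hp₁, hp₂, rfl⟩ := Option.map₂_eq_some_iff.mp hp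
    simp [RawPath.append, ih₁ hp₁, ih₂ hp₂]
  | plusOne _ ih =>
    simp only [REM.lengthParity] at hp
    split_ifs at hp with heq
    cases hp
    exact ih heq
  | plusStep _ _ _ ih₁ ih₂ =>
    have hp' := hp
    simp only [REM.lengthParity] at hp'
    split_ifs at hp' with heq
    cases hp'
    simp [RawPath.append, ih₁ heq, ih₂ hp]
  | test _ _ ih | store _ ih => exact ih hp

lemma apply_eq_of_not_mem_regs (h : REMSem G e ρ lam lam') {i : ℕ} (hi : i ∉ e.regs) :
    lam' i = lam i := by
  induction h with
  | eps | lab => rfl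
  | unionL _ ih | unionR _ ih | test _ _ ih =>
    simp only [REM.regs, Finset.mem_union, not_or] at hi
    tauto
  | plusOne _ ih => exact ih hi
  | concat _ _ _ ih₁ ih₂ =>
    simp only [REM.regs, Finset.mem_union, not_or] at hi
    exact (ih₂ hi.2).trans (ih₁ hi.1)
  | plusStep _ _ _ ih₁ ih₂ => exact (ih₂ hi).trans (ih₁ hi)
  | store _ ih =>
    simp only [REM.regs, Finset.mem_union, List.mem_toFinset, not_or] at hi
    simp [ih hi.2, setRegs, hi.1]

lemma star_append {ρ₁ ρ₂ : RawPath} {lam₁ : RAsg} (h₁ : REMSem G e ρ₁ lam lam₁)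
    (h₂ : REMSem G e.star ρ₂ lam₁ lam') (hjoin : ρ₁.last = ρ₂.start) :
    REMSem G e.star (ρ₁.append ρ₂) lam lam' := by
  cases h₂ with
  | unionL hnil =>
    cases hnil with
    | eps u =>
      obtain rfl : ρ₁.last = u := hjoin
      rw [show ρ₁.append ⟨ρ₁.last, []⟩ = ρ₁ by simp [RawPath.append]]
      exact unionR (plusOne h₁)
  | unionR hplus => exact unionR (plusStep h₁ hplus hjoin)

lemma star_lab_lab_of_even (hG : G.WF 1) {s : List (ℕ × ℕ)} :
    ∀ {u : ℕ}, G.IsPath ⟨u, s⟩ → Even s.length →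
      REMSem G (REM.concat (.lab 0) (.lab 0)).star ⟨u, s⟩ lam lam := by
  induction s using List.twoStepInduction with
  | nil => exact fun hp _ => unionL (eps _ (DataGraph.isPath_nil.mp hp) lam)
  | singleton x => simp
  | cons_cons x y s ih =>
    obtain ⟨a, v⟩ := x
    obtain ⟨b, w⟩ := y
    intro u hp heven
    obtain ⟨hav, hvw⟩ := (DataGraph.isPath_cons hG.wfAny).mp hp
    obtain ⟨hbw, hrest⟩ := (DataGraph.isPath_cons hG.wfAny).mp hvw
    obtain rfl := hG.label_eq_zero hav
    obtain rfl := hG.label_eq_zero hbw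
    exact star_append (ρ₁ := ⟨u, [(0, v), (0, w)]⟩) (ρ₂ := ⟨w, s⟩)
      (concat (lab u 0 v hav lam) (lab v 0 w hbw lam) rfl)
      (ih hrest (by simpa [parity_simps] using heven)) rfl

lemma lab_star_lab_lab_of_odd (hG : G.WF 1) (hp : G.IsPath ρ)
    (hodd : Odd ρ.steps.length) :
    REMSem G (.concat (.lab 0) (REM.concat (.lab 0) (.lab 0)).star) ρ lam lam := by
  obtain ⟨u, _ | ⟨⟨a, v⟩, s⟩⟩ := ρ
  · simp at hodd
  obtain ⟨hav, hrest⟩ := (DataGraph.isPath_cons hG.wfAny).mp hp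
  obtain rfl := hG.label_eq_zero hav
  exact concat (ρ₁ := ⟨u, [(0, v)]⟩) (ρ₂ := ⟨v, s⟩) (lab u 0 v hav lam)
    (star_lab_lab_of_even hG hrest (by simpa [parity_simps] using hodd)) rfl

end REMSem

/-- The REM `↓r. a(aa)*[r^=]`, with `a` coded as `0` and `r` as register `0`. -/
def oddClosedWalkREM : REM :=
  .store [0] (.test (.concat (.lab 0) (REM.concat (.lab 0) (.lab 0)).star) (.eq 0))

section OddClosedWalk

variable {G : DataGraph} {ρ : RawPath}

lemma REMSem.of_oddClosedWalkREM (hG : G.WFAny) (hDB : G.IsDB) {lam lam' : RAsg}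
    (h : REMSem G oddClosedWalkREM ρ lam lam') :
    G.IsPath ρ ∧ Odd ρ.steps.length ∧ ρ.last = ρ.start := by
  have hp := h.isPath hG
  refine ⟨hp, (ZMod.natCast_eq_one_iff_odd).mp (h.length_cast_eq rfl), ?_⟩
  unfold oddClosedWalkREM at h
  cases h with
  | store h =>
    cases h with
    | test hmatch hlast =>
      have hstart : lam' 0 = some (G.val ρ.start) := by
        rw [hmatch.apply_eq_of_not_mem_regs (by decide)]
        simp [setRegs]
      have hval : G.val ρ.last = G.val ρ.start :=
        Option.some_injective _ (hlast.symm.trans hstart)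
      exact hDB _ _ (hp.last_lt hG) hp.1 hval

lemma REMSem.oddClosedWalkREM_of_odd_cycle (hG : G.WF 1) (hp : G.IsPath ρ)
    (hodd : Odd ρ.steps.length) (hcyc : ρ.last = ρ.start) (lam : RAsg) :
    REMSem G oddClosedWalkREM ρ lam (setRegs lam [0] (G.val ρ.start)) := by
  refine store (test (lab_star_lab_lab_of_odd hG hp hodd) ?_)
  simp [RCond.CSat, setRegs, hcyc]

lemma validAsg_setRegs_botAsg {v : ℕ} (hv : v < G.n) :
    ValidAsg G 1 (setRegs botAsg [0] (G.val v)) := by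
  refine ⟨fun i hi => ?_, fun i d hd => ?_⟩
  · simp [setRegs, botAsg, Nat.one_le_iff_ne_zero.mp hi]
  · by_cases hi : i = 0
    · simp only [setRegs, hi, List.mem_singleton, if_true, Option.some.injEq] at hd
      exact ⟨v, hv, hd⟩
    · simp [setRegs, botAsg, hi] at hd

lemma RL.holds_exPath_exReg_exReg_rem (k : ℕ) (e : REM) :
    RL.holds G k (.exPath 0 (.exReg 0 (.exReg 1 (.rem e 0 (.var 0) (.var 1))))) ↔
      ∃ ρ, G.IsPath ρ ∧ ∃ lam, ValidAsg G k lam ∧ ∃ lam', ValidAsg G k lam' ∧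
        REMSem G e ρ lam lam' := by
  simp [RL.holds, RL.Sat, RegTerm.interp, Function.update]

lemma holds_oddClosedWalkREM_iff (hG : G.WF 1) (hDB : G.IsDB) :
    RL.holds G 1 (.exPath 0 (.exReg 0 (.exReg 1 (.rem oddClosedWalkREM 0 (.var 0) (.var 1))))) ↔
      HasOddCycle G := by
  rw [RL.holds_exPath_exReg_exReg_rem]
  constructor
  · rintro ⟨ρ, _, _, _, _, _, h⟩
    exact ⟨ρ, h.of_oddClosedWalkREM hG.wfAny hDB⟩
  · rintro ⟨ρ, hp, hodd, hcyc⟩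
    exact ⟨ρ, hp, botAsg, botValid G 1, _, validAsg_setRegs_botAsg hp.1,
      REMSem.oddClosedWalkREM_of_odd_cycle hG hp hodd hcyc botAsg⟩

end OddClosedWalk

/-- Let an undirected graph be represented as a graph database `G` over
`Σ = {a}` (coded `a = 0`) with a symmetric edge relation.  Then, with
`e = ↓r. a(aa)*[r^=]` over the single register `r`:  `¬∃π ∃λ ∃λ' e(π,λ,λ')` holds in `G`
iff `G` is bipartite; `∃π ∃λ ∃λ' e(π,λ,λ')` holds iff `G` has an odd-length cycle; and
`G` is bipartite iff it has no odd-length cycle.  Hence bipartiteness is expressible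
in RL. -/
theorem rl_expresses_bipartiteness :
    ∀ G : DataGraph, G.WF 1 → G.IsDB →
      (∀ u a v, (u, a, v) ∈ G.edges ↔ (v, a, u) ∈ G.edges) →
      ((RL.holds G 1 (RL.not (RL.exPath 0 (RL.exReg 0 (RL.exReg 1
          (RL.rem (REM.store [0] (REM.test
              (REM.concat (REM.lab 0) (REM.star (REM.concat (REM.lab 0) (REM.lab 0))))
              (RCond.eq 0)))
            0 (RegTerm.var 0) (RegTerm.var 1)))))) ↔ Bipartite G) ∧
       (RL.holds G 1 (RL.exPath 0 (RL.exReg 0 (RL.exReg 1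
          (RL.rem (REM.store [0] (REM.test
              (REM.concat (REM.lab 0) (REM.star (REM.concat (REM.lab 0) (REM.lab 0))))
              (RCond.eq 0)))
            0 (RegTerm.var 0) (RegTerm.var 1))))) ↔ HasOddCycle G) ∧
       (Bipartite G ↔ ¬ HasOddCycle G)) := by
  intro G hWF hDB hsym
  have hcycle := holds_oddClosedWalkREM_iff hWF hDB
  have hbip := DataGraph.bipartite_iff_not_hasOddCycle hWF.wfAny hsym
  exact ⟨(not_congr hcycle).trans hbip.symm, hcycle, hbip⟩
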